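/- Let Λ ⊂ ℝ^{n+1} be a unimodular lattice, 𝐯 ∈ Λ primitive, and suppose that at some time t₀ one has λ₂(Λ_t₀)/λ₁(Λ_t₀) > e^{(n+1)S/n} where Λ_t = a_t Λ and 𝐯 achieves λ₁(Λ_{t₀}), i.e. ‖a_{t₀}𝐯‖ = λ₁(Λ_{t₀}). Then for all s ∈ [0,S], the vector 𝐯 still achieves the first minimum: ‖a_{t₀+s}𝐯‖ = λ₁(Λ_{t₀+s}). -/

import Mathlib

open Real Filter

/-- The `i`-th successive minimum of the lattice `g ℤ^{n+1}` for the sup norm on `ℝ^{n+1}`: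
the least `r ≥ 0` such that the lattice contains `i` linearly independent vectors of
norm at most `r`. -/
noncomputable def succMin (n : ℕ) (g : Matrix (Fin (n+1)) (Fin (n+1)) ℝ) (i : ℕ) : ℝ :=
  sInf {r | 0 ≤ r ∧ ∃ w : Fin i → (Fin (n+1) → ℤ),
    LinearIndependent ℝ (fun j => fun l => ((w j l : ℝ))) ∧
    ∀ j, ‖g.mulVec (fun l => (w j l : ℝ))‖ ≤ r}

/-- The diagonal matrix `a_t = diag(e^{-t}, e^{t/n}, …, e^{t/n})`. -/
noncomputable def aMat (n : ℕ) (t : ℝ) : Matrix (Fin (n+1)) (Fin (n+1)) ℝ :=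
  Matrix.diagonal (fun i => if i = 0 then Real.exp (-t) else Real.exp (t / n))

/-!
Along the orbit, `a_s` stretches every vector by at most `e^{s/n}` and `a_{-s}` by at most
`e^s`. If some lattice vector `w` became shorter than `𝐯` at time `t₀ + s`, then either `w` is
a multiple of `𝐯`, hence an integer multiple of it by primitivity and not shorter, or `𝐯, w` are
independent and both have length at most `e^s · e^{s/n} λ₁ = e^{(n+1)s/n} λ₁` at time `t₀`,
contradicting the gap between `λ₁` and `λ₂`.
-/

open Matrix

lemma aMat_add (n : ℕ) (s t : ℝ) : aMat n (s + t) = aMat n s * aMat n t := by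
  simp only [aMat, diagonal_mul_diagonal]
  congr 1
  funext i
  split_ifs <;> rw [← Real.exp_add] <;> ring_nf

lemma norm_diagonal_mulVec_le {ι : Type*} [Fintype ι] [DecidableEq ι] (d y : ι → ℝ) {C : ℝ}
    (hC0 : 0 ≤ C) (hC : ∀ i, |d i| ≤ C) : ‖diagonal d *ᵥ y‖ ≤ C * ‖y‖ := by
  refine (pi_norm_le_iff_of_nonneg (by positivity)).2 fun i => ?_
  rw [mulVec_diagonal, norm_mul, Real.norm_eq_abs]
  exact mul_le_mul (hC i) (norm_le_pi_norm y i) (norm_nonneg _) hC0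

lemma norm_aMat_mulVec_le (n : ℕ) {s : ℝ} (hs : 0 ≤ s) (y : Fin (n+1) → ℝ) :
    ‖aMat n s *ᵥ y‖ ≤ exp (s / n) * ‖y‖ := by
  refine norm_diagonal_mulVec_le _ y (exp_pos _).le fun i => ?_
  have : 0 ≤ s / n := by positivity
  split_ifs
  · rw [abs_of_pos (exp_pos _), exp_le_exp]
    linarith
  · rw [abs_of_pos (exp_pos _)]

lemma norm_aMat_neg_mulVec_le (n : ℕ) {s : ℝ} (hs : 0 ≤ s) (y : Fin (n+1) → ℝ) :
    ‖aMat n (-s) *ᵥ y‖ ≤ exp s * ‖y‖ := by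
  refine norm_diagonal_mulVec_le _ y (exp_pos _).le fun i => ?_
  have : 0 ≤ s / n := by positivity
  have : -s / n = -(s / n) := neg_div _ _
  split_ifs <;> (rw [abs_of_pos (exp_pos _), exp_le_exp]; linarith)

lemma exists_intCast_eq_of_smul_eq {ι : Type*} [Fintype ι] {v w : ι → ℤ}
    (hprim : Finset.univ.gcd v = 1) {c : ℝ}
    (h : c • (fun i => (v i : ℝ)) = fun i => (w i : ℝ)) : ∃ m : ℤ, c = m := by
  obtain ⟨u, hu⟩ := Finset.gcd_eq_sum_mul Finset.univ v
  refine ⟨∑ i, w i * u i, ?_⟩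
  have hu' : (1 : ℝ) = ∑ i, (v i : ℝ) * u i := by
    rw [hprim] at hu
    exact_mod_cast hu
  calc c = c * ∑ i, (v i : ℝ) * u i := by rw [← hu', mul_one]
    _ = ∑ i, c * v i * u i := by rw [Finset.mul_sum]; simp only [mul_assoc]
    _ = ((∑ i, w i * u i : ℤ) : ℝ) := by
      push_cast
      exact Finset.sum_congr rfl fun i _ => by rw [← congrFun h i]; rfl

section SuccessiveMinima

variable {n : ℕ} (A : Matrix (Fin (n+1)) (Fin (n+1)) ℝ)

lemma intCast_vec_ne_zero {v : Fin (n+1) → ℤ} (hv : v ≠ 0) : (fun l => (v l : ℝ)) ≠ 0 :=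
  fun h => hv (funext fun l => by simpa using congrFun h l)

lemma succMin_one_le {v : Fin (n+1) → ℤ} (hv : v ≠ 0) :
    succMin n A 1 ≤ ‖A *ᵥ fun l => (v l : ℝ)‖ :=
  csInf_le ⟨0, fun _ hr => hr.1⟩
    ⟨norm_nonneg _, fun _ => v, linearIndependent_unique_iff.2 (intCast_vec_ne_zero hv),
      fun _ => le_rfl⟩

lemma succMin_two_le {v w : Fin (n+1) → ℤ}
    (hvw : LinearIndependent ℝ ![fun l => (v l : ℝ), fun l => (w l : ℝ)]) {r : ℝ}
    (hv : ‖A *ᵥ fun l => (v l : ℝ)‖ ≤ r) (hw : ‖A *ᵥ fun l => (w l : ℝ)‖ ≤ r) :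
    succMin n A 2 ≤ r := by
  refine csInf_le ⟨0, fun _ hr => hr.1⟩ ⟨(norm_nonneg _).trans hv, ![v, w], ?_, ?_⟩
  · convert hvw using 1
    funext j
    fin_cases j <;> rfl
  · intro j
    fin_cases j
    exacts [hv, hw]

lemma norm_mulVec_eq_succMin_one {v : Fin (n+1) → ℤ} (hv : v ≠ 0)
    (hshortest : ∀ w : Fin (n+1) → ℤ, w ≠ 0 →
      ‖A *ᵥ fun l => (v l : ℝ)‖ ≤ ‖A *ᵥ fun l => (w l : ℝ)‖) :
    ‖A *ᵥ fun l => (v l : ℝ)‖ = succMin n A 1 := by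
  refine le_antisymm ?_ (succMin_one_le A hv)
  refine le_csInf ⟨_, norm_nonneg _, fun _ => v,
    linearIndependent_unique_iff.2 (intCast_vec_ne_zero hv), fun _ => le_rfl⟩ ?_
  rintro r ⟨-, W, hW, hWr⟩
  have hW0 : W 0 ≠ 0 := fun h => hW.ne_zero 0 (funext fun l => by simp [h])
  exact (hshortest _ hW0).trans (hWr 0)

lemma norm_mulVec_le_of_smul_eq {v w : Fin (n+1) → ℤ} (hprim : Finset.univ.gcd v = 1)
    (hw : w ≠ 0) {c : ℝ} (h : c • (fun l => (v l : ℝ)) = fun l => (w l : ℝ)) :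
    ‖A *ᵥ fun l => (v l : ℝ)‖ ≤ ‖A *ᵥ fun l => (w l : ℝ)‖ := by
  obtain ⟨m, rfl⟩ := exists_intCast_eq_of_smul_eq hprim h
  have hm : m ≠ 0 := by
    rintro rfl
    exact intCast_vec_ne_zero hw (by simpa using h.symm)
  rw [← h, mulVec_smul, norm_smul, Real.norm_eq_abs, ← Int.cast_abs]
  exact le_mul_of_one_le_left (norm_nonneg _) (by exact_mod_cast Int.one_le_abs hm)

theorem norm_mulVec_eq_succMin_one_of_norm_le {B : Matrix (Fin (n+1)) (Fin (n+1)) ℝ}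
    {v : Fin (n+1) → ℤ} (hv : v ≠ 0) (hprim : Finset.univ.gcd v = 1)
    (hmin : ‖A *ᵥ fun l => (v l : ℝ)‖ = succMin n A 1) {α β : ℝ} (hβ : 0 ≤ β)
    (hBA : ∀ x, ‖B *ᵥ x‖ ≤ α * ‖A *ᵥ x‖) (hAB : ∀ x, ‖A *ᵥ x‖ ≤ β * ‖B *ᵥ x‖)
    (hgap : β * α * succMin n A 1 < succMin n A 2) :
    ‖B *ᵥ fun l => (v l : ℝ)‖ = succMin n B 1 := by
  refine norm_mulVec_eq_succMin_one B hv fun w hw => ?_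
  by_contra! hlt
  by_cases hind : LinearIndependent ℝ ![fun l => (w l : ℝ), fun l => (v l : ℝ)]
  · have hsecond : succMin n A 2 ≤ β * ‖B *ᵥ fun l => (v l : ℝ)‖ :=
      succMin_two_le A hind ((hAB _).trans (mul_le_mul_of_nonneg_left hlt.le hβ)) (hAB _)
    have := mul_le_mul_of_nonneg_left (hBA fun l => (v l : ℝ)) hβ
    rw [hmin] at this
    linarith
  · rw [linearIndependent_fin2] at hind
    push Not at hind
    obtain ⟨c, hc⟩ := hind (intCast_vec_ne_zero hv)
    exact hlt.not_ge (norm_mulVec_le_of_smul_eq B hprim hw hc)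

end SuccessiveMinima

theorem stays_first_minimum_general (n : ℕ) (hn : 1 ≤ n)
    (g : Matrix (Fin (n+1)) (Fin (n+1)) ℝ)
    (v : Fin (n+1) → ℤ) (hv : v ≠ 0)
    (hprim : Finset.univ.gcd (fun i => v i) = 1)
    (t₀ S : ℝ)
    (hmin : ‖(aMat n t₀ * g).mulVec (fun i => (v i : ℝ))‖ = succMin n (aMat n t₀ * g) 1)
    (hgap : Real.exp (((n : ℝ) + 1) * S / n) * succMin n (aMat n t₀ * g) 1
      < succMin n (aMat n t₀ * g) 2) :
    ∀ s ∈ Set.Icc (0 : ℝ) S,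
      ‖(aMat n (t₀ + s) * g).mulVec (fun i => (v i : ℝ))‖
        = succMin n (aMat n (t₀ + s) * g) 1 := by
  rintro s ⟨hs0, hsS⟩
  have hn' : (0 : ℝ) < n := by exact_mod_cast hn
  refine norm_mulVec_eq_succMin_one_of_norm_le _ hv hprim hmin (α := exp (s / n)) (exp_pos s).le
    (fun x => ?_) (fun x => ?_) ?_
  · rw [add_comm t₀, aMat_add, mul_assoc, ← mulVec_mulVec]
    exact norm_aMat_mulVec_le n hs0 _
  · rw [show aMat n t₀ = aMat n (-s) * aMat n (t₀ + s) by rw [← aMat_add]; ring_nf,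
      mul_assoc, ← mulVec_mulVec]
    exact norm_aMat_neg_mulVec_le n hs0 _
  calc exp s * exp (s / n) * succMin n (aMat n t₀ * g) 1
      = exp ((n + 1) * s / n) * succMin n (aMat n t₀ * g) 1 := by
        rw [← exp_add]; congr 2; field_simp
    _ ≤ exp ((n + 1) * S / n) * succMin n (aMat n t₀ * g) 1 := by
        gcongr
        exact hmin ▸ norm_nonneg _
    _ < _ := hgap

/-- If at time `t₀` the primitive vector `𝐯` achieves `λ₁` and `λ₂/λ₁ > e^{(n+1)S/n}`, then
`𝐯` keeps achieving the first minimum on the whole time interval `[t₀, t₀ + S]`. -/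
theorem stays_first_minimum (n : ℕ) (hn : 1 ≤ n)
    (g : Matrix (Fin (n+1)) (Fin (n+1)) ℝ) (hg : |g.det| = 1)
    (v : Fin (n+1) → ℤ) (hv : v ≠ 0)
    (hprim : Finset.univ.gcd (fun i => v i) = 1)
    (t₀ S : ℝ) (hS : 0 ≤ S)
    (hmin : ‖(aMat n t₀ * g).mulVec (fun i => (v i : ℝ))‖ = succMin n (aMat n t₀ * g) 1)
    (hgap : Real.exp (((n : ℝ) + 1) * S / n) * succMin n (aMat n t₀ * g) 1
      < succMin n (aMat n t₀ * g) 2) :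
    ∀ s ∈ Set.Icc (0 : ℝ) S,
      ‖(aMat n (t₀ + s) * g).mulVec (fun i => (v i : ℝ))‖
        = succMin n (aMat n (t₀ + s) * g) 1 :=
  stays_first_minimum_general n hn g v hv hprim t₀ S hmin hgap
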